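/- Let f be continuously differentiable, μ-strongly convex with L-Lipschitz gradient (0 < μ < L), and let {x_k}, {y_k} be generated by the NAG method with step size s = 1/L. Then with λ := 2 / ( sqrt( ((L-μ)²/μ²)(4L-μ)² + 8L(2L-μ)(L-μ)/μ ) - ((L-μ)/μ)(4L-μ) ) and ρ := 2λL(L-μ)/(μ + λ(2L-μ)(L-μ)), one has 0 < ρ < 1 - μ²/(4L² - 3Lμ + μ²) and f(x_k) - f* ≤ ρ^k (f(x_0) - f*) for all k ≥ 1. -/

import Mathlib

open Filter Finset
open scoped RealInnerProductSpace Topology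

noncomputable def lamConst (μ L : ℝ) : ℝ :=
  2 / (Real.sqrt ((L - μ) ^ 2 / μ ^ 2 * (4 * L - μ) ^ 2 +
        8 * L * (2 * L - μ) * (L - μ) / μ) - (L - μ) / μ * (4 * L - μ))

noncomputable def rhoConst (μ L : ℝ) : ℝ :=
  2 * lamConst μ L * L * (L - μ) / (μ + lamConst μ L * (2 * L - μ) * (L - μ))

section auxcalc
variable {n : ℕ}

lemma hasDerivAt_comp_line (f : EuclideanSpace ℝ (Fin n) → ℝ)
    (hf : ContDiff ℝ 1 f) (w u : EuclideanSpace ℝ (Fin n)) (t₀ : ℝ) :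
    HasDerivAt (fun t : ℝ => f (w + t • u)) ⟪gradient f (w + t₀ • u), u⟫ t₀ := by
  have hdiff : DifferentiableAt ℝ f (w + t₀ • u) := (hf.differentiable one_ne_zero) _
  have hg : HasGradientAt f (gradient f (w + t₀ • u)) (w + t₀ • u) := hdiff.hasGradientAt
  have hF : HasFDerivAt f ((InnerProductSpace.toDual ℝ _) (gradient f (w + t₀ • u)))
      (w + t₀ • u) := hasGradientAt_iff_hasFDerivAt.1 hg
  have hγ : HasDerivAt (fun t : ℝ => w + t • u) u t₀ := by
    simpa using ((hasDerivAt_id t₀).smul_const u).const_add w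
  have h := hF.comp_hasDerivAt t₀ hγ
  simpa [InnerProductSpace.toDual_apply_apply, Function.comp_def] using h

lemma sc_lower (f : EuclideanSpace ℝ (Fin n) → ℝ) (μ : ℝ)
    (hf : ContDiff ℝ 1 f)
    (hsc : ConvexOn ℝ Set.univ (fun z => f z - μ / 2 * ‖z‖ ^ 2))
    (y z : EuclideanSpace ℝ (Fin n)) :
    f y + ⟪gradient f y, z - y⟫ + μ / 2 * ‖z - y‖ ^ 2 ≤ f z := by
  set u := z - y with hu
  -- the 1-D function
  have hconv : ConvexOn ℝ Set.univ (fun t : ℝ => f (y + t • u) - μ / 2 * ‖y + t • u‖ ^ 2) := by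
    have h := hsc.comp_affineMap (AffineMap.lineMap y z)
    have he : (fun t : ℝ => f (y + t • u) - μ / 2 * ‖y + t • u‖ ^ 2)
        = (fun z => f z - μ / 2 * ‖z‖ ^ 2) ∘ (AffineMap.lineMap y z) := by
      funext t
      simp [Function.comp, AffineMap.lineMap_apply_module', hu, add_comm]
    rw [he]
    simpa using h
  -- norm expansion
  have hnorm : ∀ t : ℝ, ‖y + t • u‖ ^ 2 = ‖y‖ ^ 2 + 2 * t * ⟪y, u⟫ + t ^ 2 * ‖u‖ ^ 2 := by
    intro t
    rw [norm_add_sq_real, real_inner_smul_right, norm_smul]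
    simp [mul_pow, sq_abs]
    ring
  have hq : HasDerivAt (fun t : ℝ => μ / 2 * ‖y + t • u‖ ^ 2) (μ * ⟪y, u⟫) 0 := by
    have h1 : HasDerivAt (fun t : ℝ => μ / 2 * (‖y‖ ^ 2 + 2 * t * ⟪y, u⟫ + t ^ 2 * ‖u‖ ^ 2))
        (μ / 2 * (2 * ⟪y, u⟫ + 2 * 0 * ‖u‖ ^ 2)) 0 := by
      have h2 : HasDerivAt (fun t : ℝ => ‖y‖ ^ 2 + 2 * t * ⟪y, u⟫ + t ^ 2 * ‖u‖ ^ 2)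
          (2 * ⟪y, u⟫ + 2 * 0 * ‖u‖ ^ 2) 0 := by
        have ha : HasDerivAt (fun t : ℝ => 2 * t * ⟪y, u⟫) (2 * ⟪y, u⟫) 0 := by
          simpa using (((hasDerivAt_id (0:ℝ)).const_mul 2).mul_const ⟪y, u⟫)
        have hb : HasDerivAt (fun t : ℝ => t ^ 2 * ‖u‖ ^ 2) (2 * 0 * ‖u‖ ^ 2) 0 := by
          simpa using ((hasDerivAt_pow 2 (0:ℝ)).mul_const (‖u‖ ^ 2))
        exact (ha.const_add (‖y‖ ^ 2)).add hb
      exact h2.const_mul (μ / 2)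
    have he : (fun t : ℝ => μ / 2 * ‖y + t • u‖ ^ 2)
        = fun t : ℝ => μ / 2 * (‖y‖ ^ 2 + 2 * t * ⟪y, u⟫ + t ^ 2 * ‖u‖ ^ 2) := by
      funext t; rw [hnorm t]
    rw [he]
    convert h1 using 1
    ring
  have hfd : HasDerivAt (fun t : ℝ => f (y + t • u)) ⟪gradient f y, u⟫ 0 := by
    have := hasDerivAt_comp_line f hf y u 0
    simpa using this
  have hder : HasDerivAt (fun t : ℝ => f (y + t • u) - μ / 2 * ‖y + t • u‖ ^ 2)
      (⟪gradient f y, u⟫ - μ * ⟪y, u⟫) 0 := hfd.sub hq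
  have hslope := hconv.le_slope_of_hasDerivAt (Set.mem_univ (0:ℝ)) (Set.mem_univ (1:ℝ))
      one_pos hder
  rw [slope_def_field] at hslope
  simp only [one_smul, zero_smul, add_zero] at hslope
  have hyz : y + u = z := by rw [hu]; abel
  rw [hyz] at hslope
  have hE : ‖z‖ ^ 2 = ‖y‖ ^ 2 + 2 * ⟪y, u⟫ + ‖u‖ ^ 2 := by
    have := hnorm 1
    rw [one_smul] at this
    rw [← hyz, this]; ring
  have h1 : (⟪gradient f y, u⟫ - μ * ⟪y, u⟫) ≤
      (f z - μ / 2 * ‖z‖ ^ 2 - (f y - μ / 2 * ‖y‖ ^ 2)) / (1 - 0) := hslope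
  have hE2 : μ / 2 * ‖z‖ ^ 2 = μ / 2 * ‖y‖ ^ 2 + μ * ⟪y, u⟫ + μ / 2 * ‖u‖ ^ 2 := by
    linear_combination (μ / 2) * hE
  rw [show (1:ℝ) - 0 = 1 by norm_num, div_one] at h1
  linarith [h1, hE2]

lemma smooth_upper (f : EuclideanSpace ℝ (Fin n) → ℝ) (L : ℝ) (hL : 0 < L)
    (hf : ContDiff ℝ 1 f)
    (hlip : LipschitzWith (Real.toNNReal L) (fun z => gradient f z))
    (y z : EuclideanSpace ℝ (Fin n)) :
    f z ≤ f y + ⟪gradient f y, z - y⟫ + L / 2 * ‖z - y‖ ^ 2 := by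
  set u := z - y with hu
  set ψ : ℝ → ℝ := fun t => L / 2 * (t ^ 2 * ‖u‖ ^ 2) - f (y + t • u) with hψ
  have hψd : ∀ t₀ : ℝ, HasDerivAt ψ (L * t₀ * ‖u‖ ^ 2 - ⟪gradient f (y + t₀ • u), u⟫) t₀ := by
    intro t₀
    have h1 : HasDerivAt (fun t : ℝ => L / 2 * (t ^ 2 * ‖u‖ ^ 2)) (L * t₀ * ‖u‖ ^ 2) t₀ := by
      have := ((hasDerivAt_pow 2 t₀).mul_const (‖u‖ ^ 2)).const_mul (L / 2)
      refine this.congr_deriv ?_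
      ring
    exact h1.sub (hasDerivAt_comp_line f hf y u t₀)
  have hdiff : Differentiable ℝ ψ := fun t => (hψd t).differentiableAt
  have hmono : Monotone (deriv ψ) := by
    have hderiv : deriv ψ = fun t => L * t * ‖u‖ ^ 2 - ⟪gradient f (y + t • u), u⟫ :=
      funext fun t => (hψd t).deriv
    rw [hderiv]
    intro a b hab
    simp only
    have hCS : ⟪gradient f (y + b • u) - gradient f (y + a • u), u⟫ ≤
        ‖gradient f (y + b • u) - gradient f (y + a • u)‖ * ‖u‖ := real_inner_le_norm _ _
    have hlipd : ‖gradient f (y + b • u) - gradient f (y + a • u)‖ ≤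
        L * ‖(y + b • u) - (y + a • u)‖ := by
      have h := hlip.dist_le_mul (y + b • u) (y + a • u)
      rw [Real.coe_toNNReal L hL.le] at h
      simpa [dist_eq_norm] using h
    have hseg : ‖(y + b • u) - (y + a • u)‖ = (b - a) * ‖u‖ := by
      have : (y + b • u) - (y + a • u) = (b - a) • u := by
        rw [sub_smul]; abel
      rw [this, norm_smul, Real.norm_eq_abs, abs_of_nonneg (by linarith : (0:ℝ) ≤ b - a)]
    have hinner : ⟪gradient f (y + b • u), u⟫ - ⟪gradient f (y + a • u), u⟫ =
        ⟪gradient f (y + b • u) - gradient f (y + a • u), u⟫ := (inner_sub_left _ _ _).symm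
    rw [hseg] at hlipd
    have hmm := mul_le_mul_of_nonneg_right hlipd (norm_nonneg u)
    nlinarith [hCS, hmm, hinner]
  have hconv := hmono.convexOn_univ_of_deriv hdiff
  have hslope := hconv.le_slope_of_hasDerivAt (Set.mem_univ (0:ℝ)) (Set.mem_univ (1:ℝ))
      one_pos (hψd 0)
  rw [slope_def_field] at hslope
  rw [show (1:ℝ) - 0 = 1 by norm_num, div_one] at hslope
  have hψ0 : ψ 0 = - f y := by simp [hψ]
  have hψ1 : ψ 1 = L / 2 * ‖u‖ ^ 2 - f z := by
    have hyz : y + (1:ℝ) • u = z := by rw [one_smul, hu]; abel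
    simp only [hψ]
    rw [hyz]
    norm_num
  have hd0 : L * 0 * ‖u‖ ^ 2 - ⟪gradient f (y + (0:ℝ) • u), u⟫ = - ⟪gradient f y, u⟫ := by
    simp
  rw [hd0, hψ0, hψ1] at hslope
  linarith [hslope]


end auxcalc

section scalars
variable {μ L : ℝ}

lemma lam_pos (hμ : 0 < μ) (hμL : μ < L) : 0 < lamConst μ L := by
  have hL : 0 < L := hμ.trans hμL
  have hLm : 0 < L - μ := sub_pos.2 hμL
  have h4 : 0 < 4 * L - μ := by linarith
  have h2 : 0 < 2 * L - μ := by linarith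
  have hA : 0 ≤ (L - μ) / μ * (4 * L - μ) := by positivity
  have hB : 0 < 8 * L * (2 * L - μ) * (L - μ) / μ := by positivity
  have hS : (L - μ) ^ 2 / μ ^ 2 * (4 * L - μ) ^ 2 + 8 * L * (2 * L - μ) * (L - μ) / μ
      = ((L - μ) / μ * (4 * L - μ)) ^ 2 + 8 * L * (2 * L - μ) * (L - μ) / μ := by ring
  have hlt : (L - μ) / μ * (4 * L - μ) <
      Real.sqrt ((L - μ) ^ 2 / μ ^ 2 * (4 * L - μ) ^ 2 + 8 * L * (2 * L - μ) * (L - μ) / μ) := by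
    rw [hS]
    rw [show ((L - μ) / μ * (4 * L - μ)) ^ 2 + 8 * L * (2 * L - μ) * (L - μ) / μ
        = ((L - μ) / μ * (4 * L - μ)) ^ 2 + 8 * L * (2 * L - μ) * (L - μ) / μ from rfl]
    have := Real.lt_sqrt (x := (L - μ) / μ * (4 * L - μ))
      (y := ((L - μ) / μ * (4 * L - μ)) ^ 2 + 8 * L * (2 * L - μ) * (L - μ) / μ) hA
    rw [this]
    linarith
  unfold lamConst
  have : 0 < Real.sqrt ((L - μ) ^ 2 / μ ^ 2 * (4 * L - μ) ^ 2 +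
      8 * L * (2 * L - μ) * (L - μ) / μ) - (L - μ) / μ * (4 * L - μ) := sub_pos.2 hlt
  positivity

lemma lam_quad (hμ : 0 < μ) (hμL : μ < L) :
    2 * L * (2 * L - μ) * (L - μ) * lamConst μ L ^ 2
      = (L - μ) * (4 * L - μ) * lamConst μ L + μ := by
  have hL : 0 < L := hμ.trans hμL
  have hLm : 0 < L - μ := sub_pos.2 hμL
  have h4 : 0 < 4 * L - μ := by linarith
  have h2 : 0 < 2 * L - μ := by linarith
  have hlam := lam_pos hμ hμL
  set S := (L - μ) ^ 2 / μ ^ 2 * (4 * L - μ) ^ 2 + 8 * L * (2 * L - μ) * (L - μ) / μ with hSdef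
  have hSpos : 0 < S := by rw [hSdef]; positivity
  set A := (L - μ) / μ * (4 * L - μ) with hAdef
  have hlamdef : lamConst μ L = 2 / (Real.sqrt S - A) := rfl
  have hden : Real.sqrt S - A ≠ 0 := by
    intro h
    rw [hlamdef, h] at hlam
    simp at hlam
  have hsqrt : Real.sqrt S = A + 2 / lamConst μ L := by
    rw [hlamdef]
    field_simp
    ring
  have hsq : Real.sqrt S ^ 2 = S := Real.sq_sqrt hSpos.le
  rw [hsqrt] at hsq
  rw [hSdef, hAdef] at hsq
  have hlamne : lamConst μ L ≠ 0 := ne_of_gt hlam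
  have hμne : μ ≠ 0 := ne_of_gt hμ
  field_simp at hsq
  have h5 : 4 * μ ^ 4 * (2 * L * (2 * L - μ) * (L - μ) * lamConst μ L ^ 2
      - ((L - μ) * (4 * L - μ) * lamConst μ L + μ)) = 0 := by linear_combination -μ ^ 3 * hsq
  have h6 : (4:ℝ) * μ ^ 4 ≠ 0 := by positivity
  have h7 := (mul_eq_zero.1 h5).resolve_left h6
  linarith

end scalars

section scalars2
variable {μ L : ℝ}

lemma lam_mul_L_gt (hμ : 0 < μ) (hμL : μ < L) : 1 < lamConst μ L * L := by
  have hL : 0 < L := hμ.trans hμL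
  have hLm : 0 < L - μ := sub_pos.2 hμL
  have h2 : 0 < 2 * L - μ := by linarith
  have hlam := lam_pos hμ hμL
  have hQ := lam_quad hμ hμL
  by_contra h
  push_neg at h
  have hz : μ + μ * (L - μ) * lamConst μ L
      + 2 * (2 * L - μ) * (L - μ) * ((1 - lamConst μ L * L) * lamConst μ L) = 0 := by
    linear_combination -hQ
  have t2 : 0 ≤ μ * (L - μ) * lamConst μ L := by positivity
  have t3 : 0 ≤ 2 * (2 * L - μ) * (L - μ) * ((1 - lamConst μ L * L) * lamConst μ L) := by
    apply mul_nonneg (by positivity)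
    exact mul_nonneg (by linarith) hlam.le
  linarith

lemma lam_mul_Lm_lt (hμ : 0 < μ) (hμL : μ < L) : lamConst μ L * (L - μ) < 1 := by
  have hL : 0 < L := hμ.trans hμL
  have hLm : 0 < L - μ := sub_pos.2 hμL
  have h2 : 0 < 2 * L - μ := by linarith
  have hlam := lam_pos hμ hμL
  have hQ := lam_quad hμ hμL
  by_contra h
  push_neg at h
  have hz2 : μ * (3 * L - μ) * lamConst μ L
      + 2 * L * (2 * L - μ) * ((lamConst μ L * (L - μ) - 1) * lamConst μ L) - μ = 0 := by
    linear_combination hQ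
  have e1 : 0 ≤ 2 * L * (2 * L - μ) * ((lamConst μ L * (L - μ) - 1) * lamConst μ L) := by
    apply mul_nonneg (by positivity)
    exact mul_nonneg (by linarith) hlam.le
  have e2 : μ * (3 * L - μ) * lamConst μ L ≤ μ := by linarith
  have e3 : μ * (3 * L - μ) ≤ μ * (3 * L - μ) * (lamConst μ L * (L - μ)) := by
    nlinarith [mul_nonneg hμ.le (by linarith : (0:ℝ) ≤ 3 * L - μ)]
  nlinarith [mul_le_mul_of_nonneg_right e2 hLm.le]

lemma lam_gt3 (hμ : 0 < μ) (hμL : μ < L) :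
    2 * L * (4 * L - 3 * μ) + μ ^ 2 < lamConst μ L * (2 * L - μ) * (L * (4 * L - 3 * μ)) := by
  have hL : 0 < L := hμ.trans hμL
  have hLm : 0 < L - μ := sub_pos.2 hμL
  have h2 : 0 < 2 * L - μ := by linarith
  have h43 : 0 < 4 * L - 3 * μ := by linarith
  have hlam := lam_pos hμ hμL
  have hQ := lam_quad hμ hμL
  have h1L := lam_mul_L_gt hμ hμL
  by_contra hcon
  push_neg at hcon
  set lam := lamConst μ L with hlamd
  set N := 2 * L * (4 * L - 3 * μ) + μ ^ 2 with hN
  set D := L * (4 * L - 3 * μ) * (2 * L - μ) with hD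
  have hWnn : 0 ≤ N - lam * D := by rw [hN, hD]; nlinarith [hcon]
  have hWlt : N - lam * D < 2 * μ * (2 * L - μ) := by
    rw [hN, hD]
    nlinarith [h1L, mul_pos (mul_pos h43 h2) hL]
  have hK : μ ^ 4 * L * (2 * L - μ) ^ 2
      = (N - lam * D) * ((L - μ) * (4 * L - μ) * D - 4 * (L * (2 * L - μ) * (L - μ)) * N)
        + 2 * (L * (2 * L - μ) * (L - μ)) * (N - lam * D) ^ 2 := by
    rw [hN, hD]
    linear_combination (-(L * (4 * L - 3 * μ) * (2 * L - μ)) ^ 2) * hQ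
  have hM : (L - μ) * (4 * L - μ) * D - 4 * (L * (2 * L - μ) * (L - μ)) * N
        + 2 * (L * (2 * L - μ) * (L - μ)) * (2 * μ * (2 * L - μ))
      = - (L * (L - μ) * (2 * L - μ) * (16 * L ^ 2 - 16 * L * μ + 5 * μ ^ 2)) := by
    rw [hN, hD]; ring
  have hMneg : 0 < L * (L - μ) * (2 * L - μ) * (16 * L ^ 2 - 16 * L * μ + 5 * μ ^ 2) := by
    have : 0 < 16 * L ^ 2 - 16 * L * μ + 5 * μ ^ 2 := by nlinarith [sq_nonneg (4 * L - 2 * μ)]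
    positivity
  have hMW : (N - lam * D) * ((L - μ) * (4 * L - μ) * D - 4 * (L * (2 * L - μ) * (L - μ)) * N
        + 2 * (L * (2 * L - μ) * (L - μ)) * (2 * μ * (2 * L - μ)))
      = (N - lam * D) * (- (L * (L - μ) * (2 * L - μ) * (16 * L ^ 2 - 16 * L * μ + 5 * μ ^ 2))) := by
    rw [hM]
  have hT1 : 0 ≤ 2 * (L * (2 * L - μ) * (L - μ))
      * ((N - lam * D) * (2 * μ * (2 * L - μ) - (N - lam * D))) :=
    mul_nonneg (by positivity) (mul_nonneg hWnn (by linarith))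
  have hWM : 0 ≤ (N - lam * D) * (L * (L - μ) * (2 * L - μ) * (16 * L ^ 2 - 16 * L * μ + 5 * μ ^ 2)) :=
    mul_nonneg hWnn hMneg.le
  have hpos : 0 < μ ^ 4 * L * (2 * L - μ) ^ 2 := by positivity
  nlinarith [hK, hMW, hT1, hWM, hpos]

end scalars2

lemma step_key (μ L lam : ℝ) (hμ : 0 < μ) (hμL : μ < L) (hlam : 0 < lam)
    (hQ : 2 * L * (2 * L - μ) * (L - μ) * lam ^ 2 = (L - μ) * (4 * L - μ) * lam + μ)
    (hCnn : 0 ≤ 1 - lam * (L - μ)) (hr1 : 1 ≤ lam * (2 * L - μ) - 1)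
    (β v1 v2 G P I P2' : ℝ)
    (hβ0 : 0 ≤ β) (hβ1 : β ≤ 1) (hIle : I ≤ G * P)
    (hv2 : 0 ≤ v2)
    (H1 : 2 * L * v2 ≤ 2 * L * v1 + 2 * L * (β * I) - L * μ * (β ^ 2 * P ^ 2) - G ^ 2)
    (H2 : 2 * μ * L * v2 ≤ (L - μ) * G ^ 2)
    (HP2 : L ^ 2 * P2' = L ^ 2 * (β ^ 2 * P ^ 2) - 2 * L * (β * I) + G ^ 2) :
    (lam * (2 * L - μ) - 1) * (v2 + 1 / (2 * lam) * P2') ≤ v1 + 1 / (2 * lam) * P ^ 2 := by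
  have hL : 0 < L := hμ.trans hμL
  set r := lam * (2 * L - μ) - 1 with hr
  have hsum : (8 * μ * L ^ 3 * lam * v1 + 4 * μ * L ^ 3 * P ^ 2)
        - (8 * μ * L ^ 3 * lam * r * v2 + 4 * μ * L ^ 3 * r * P2')
      = 2 * lam * L * (2 * μ * L * (2 * L * v1 + 2 * L * (β * I) - L * μ * (β ^ 2 * P ^ 2)
            - G ^ 2 - 2 * L * v2))
        + 2 * lam * L * (2 * L * ((r - 1) * ((L - μ) * G ^ 2) - (r - 1) * (2 * μ * L * v2)))
        + 2 * μ * L * (1 - lam * (L - μ)) * (G - 2 * L * β * P) ^ 2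
        + 8 * μ * L ^ 2 * β * (1 - lam * (L - μ)) * (G * P - I)
        + 4 * μ * L ^ 3 * ((1 - β ^ 2) * P ^ 2) := by
    rw [hr]
    linear_combination (-2 * L * G ^ 2) * hQ + (-4 * μ * L * (lam * (2 * L - μ) - 1)) * HP2
  have m1 : 0 ≤ 2 * lam * L * (2 * μ * L * (2 * L * v1 + 2 * L * (β * I)
      - L * μ * (β ^ 2 * P ^ 2) - G ^ 2 - 2 * L * v2)) := by
    apply mul_nonneg (by positivity)
    apply mul_nonneg (by positivity)
    linarith
  have m2 : 0 ≤ 2 * lam * L * (2 * L * ((r - 1) * ((L - μ) * G ^ 2)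
      - (r - 1) * (2 * μ * L * v2))) := by
    apply mul_nonneg (by positivity)
    apply mul_nonneg (by positivity)
    have : 0 ≤ r - 1 := by linarith
    nlinarith [mul_le_mul_of_nonneg_left H2 this]
  have n1 : 0 ≤ 2 * μ * L * (1 - lam * (L - μ)) * (G - 2 * L * β * P) ^ 2 :=
    mul_nonneg (mul_nonneg (by positivity) hCnn) (sq_nonneg _)
  have n2 : 0 ≤ 8 * μ * L ^ 2 * β * (1 - lam * (L - μ)) * (G * P - I) := by
    apply mul_nonneg (mul_nonneg (mul_nonneg (by positivity) hβ0) hCnn)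
    linarith
  have h1b : 0 ≤ 1 - β ^ 2 := by nlinarith
  have n3 : 0 ≤ 4 * μ * L ^ 3 * ((1 - β ^ 2) * P ^ 2) := by
    apply mul_nonneg (by positivity)
    exact mul_nonneg h1b (sq_nonneg _)
  have hscaled : 8 * μ * L ^ 3 * lam * r * v2 + 4 * μ * L ^ 3 * r * P2'
      ≤ 8 * μ * L ^ 3 * lam * v1 + 4 * μ * L ^ 3 * P ^ 2 := by linarith
  have hmul : (0:ℝ) < 8 * μ * L ^ 3 * lam := by positivity
  have hlamne : lam ≠ 0 := ne_of_gt hlam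
  have e1 : 8 * μ * L ^ 3 * lam * (r * (v2 + 1 / (2 * lam) * P2'))
      = 8 * μ * L ^ 3 * lam * r * v2 + 4 * μ * L ^ 3 * r * P2' := by
    field_simp
    ring
  have e2 : 8 * μ * L ^ 3 * lam * (v1 + 1 / (2 * lam) * P ^ 2)
      = 8 * μ * L ^ 3 * lam * v1 + 4 * μ * L ^ 3 * P ^ 2 := by
    field_simp
    ring
  have h := hscaled
  rw [← e1, ← e2] at h
  exact le_of_mul_le_mul_left h hmul

lemma base_key (μ L lam : ℝ) (hμ : 0 < μ) (hμL : μ < L) (hlam : 0 < lam)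
    (hQ : 2 * L * (2 * L - μ) * (L - μ) * lam ^ 2 = (L - μ) * (4 * L - μ) * lam + μ)
    (hCnn : 0 ≤ 1 - lam * (L - μ)) (hr1 : 1 ≤ lam * (2 * L - μ) - 1)
    (v0 v1 G P2' : ℝ)
    (hv0 : 0 ≤ v0)
    (Hdesc : 2 * L * v1 ≤ 2 * L * v0 - G ^ 2)
    (HPL : 2 * μ * v0 ≤ G ^ 2)
    (HP2 : L ^ 2 * P2' = G ^ 2) :
    (lam * (2 * L - μ) - 1) * (v1 + 1 / (2 * lam) * P2') ≤ v0 := by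
  have hL : 0 < L := hμ.trans hμL
  set r := lam * (2 * L - μ) - 1 with hr
  have hsum : 4 * μ * L ^ 4 * lam * v0
        - (4 * μ * L ^ 4 * lam * r * v1 + 2 * μ * L ^ 4 * r * P2')
      = 2 * μ * L ^ 3 * lam * r * ((2 * L * v0 - G ^ 2) - 2 * L * v1)
        + 2 * L ^ 4 * lam * (r - 1) * (G ^ 2 - 2 * μ * v0)
        + μ * L ^ 2 * (1 - lam * (L - μ)) * G ^ 2 := by
    rw [hr]
    linear_combination (-L ^ 2 * G ^ 2) * hQ
      + (-2 * μ * L ^ 2 * (lam * (2 * L - μ) - 1)) * HP2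
  have hr0 : (0:ℝ) < r := by linarith
  have m1 : 0 ≤ 2 * μ * L ^ 3 * lam * r * ((2 * L * v0 - G ^ 2) - 2 * L * v1) := by
    apply mul_nonneg (by positivity)
    linarith
  have m2 : 0 ≤ 2 * L ^ 4 * lam * (r - 1) * (G ^ 2 - 2 * μ * v0) := by
    apply mul_nonneg (mul_nonneg (by positivity) (by linarith))
    linarith
  have m3 : 0 ≤ μ * L ^ 2 * (1 - lam * (L - μ)) * G ^ 2 :=
    mul_nonneg (mul_nonneg (by positivity) hCnn) (sq_nonneg _)
  have hscaled : 4 * μ * L ^ 4 * lam * r * v1 + 2 * μ * L ^ 4 * r * P2'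
      ≤ 4 * μ * L ^ 4 * lam * v0 := by linarith
  have hmul : (0:ℝ) < 4 * μ * L ^ 4 * lam := by positivity
  have hlamne : lam ≠ 0 := ne_of_gt hlam
  have e1 : 4 * μ * L ^ 4 * lam * (r * (v1 + 1 / (2 * lam) * P2'))
      = 4 * μ * L ^ 4 * lam * r * v1 + 2 * μ * L ^ 4 * r * P2' := by
    field_simp
    ring
  have h := hscaled
  rw [← e1] at h
  exact le_of_mul_le_mul_left h hmul


set_option maxHeartbeats 2000000 in
theorem nag_linear_convergence_step_one_over_L {n : ℕ}
    (f : EuclideanSpace ℝ (Fin n) → ℝ) (μ L s : ℝ)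
    (hμ : 0 < μ) (hμL : μ < L)
    (hf : ContDiff ℝ 1 f)
    (hsc : ConvexOn ℝ Set.univ (fun z => f z - μ / 2 * ‖z‖ ^ 2))
    (hlip : LipschitzWith (Real.toNNReal L) (fun z => gradient f z))
    (xs : EuclideanSpace ℝ (Fin n)) (hmin : ∀ z, f xs ≤ f z)
    (huniq : ∀ z, f z = f xs → z = xs)
    (t : ℕ → ℝ) (ht1 : t 1 = 1) (htmono : ∀ k, 1 ≤ k → t k < t (k + 1))
    (htlim : Tendsto t atTop atTop)
    (htrec : ∀ k, 1 ≤ k → t (k + 1) ^ 2 - t (k + 1) ≤ t k ^ 2)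
    (x y : ℕ → EuclideanSpace ℝ (Fin n))
    (hxy0 : x 0 = y 0)
    (hx : ∀ k, x (k + 1) = y k - s • gradient f (y k))
    (hy : ∀ k, y (k + 1) = x (k + 1) + ((t (k + 1) - 1) / t (k + 2)) • (x (k + 1) - x k))
    (hs : s = 1 / L) :
    0 < rhoConst μ L ∧
    rhoConst μ L < 1 - μ ^ 2 / (4 * L ^ 2 - 3 * L * μ + μ ^ 2) ∧
    ∀ k, 1 ≤ k → f (x k) - f xs ≤ rhoConst μ L ^ k * (f (x 0) - f xs) := by
  have hL : 0 < L := hμ.trans hμL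
  have hLm : 0 < L - μ := sub_pos.2 hμL
  have h2 : 0 < 2 * L - μ := by linarith
  have h43 : 0 < 4 * L - 3 * μ := by linarith
  have hlam : 0 < lamConst μ L := lam_pos hμ hμL
  have hQ := lam_quad hμ hμL
  have h1L := lam_mul_L_gt hμ hμL
  have hCnn : 0 ≤ 1 - lamConst μ L * (L - μ) := by
    have := lam_mul_Lm_lt hμ hμL
    linarith
  have hl3 := lam_gt3 hμ hμL
  have hr1 : 1 ≤ lamConst μ L * (2 * L - μ) - 1 := by nlinarith [mul_pos hL h43]
  have hr0 : 0 < lamConst μ L * (2 * L - μ) - 1 := by linarith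
  have hρ : rhoConst μ L = 1 / (lamConst μ L * (2 * L - μ) - 1) := by
    have hden : μ + lamConst μ L * (2 * L - μ) * (L - μ)
        = 2 * lamConst μ L * L * (L - μ) * (lamConst μ L * (2 * L - μ) - 1) := by
      linear_combination -hQ
    rw [rhoConst, hden]
    rw [div_eq_div_iff (by positivity) (ne_of_gt hr0)]
    ring
  refine ⟨by rw [hρ]; positivity, ?_, ?_⟩
  · -- upper bound on rho
    have hD4 : 0 < 4 * L ^ 2 - 3 * L * μ + μ ^ 2 := by nlinarith
    have hb : 1 - μ ^ 2 / (4 * L ^ 2 - 3 * L * μ + μ ^ 2)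
        = (L * (4 * L - 3 * μ)) / (4 * L ^ 2 - 3 * L * μ + μ ^ 2) := by
      rw [eq_div_iff hD4.ne', sub_mul, div_mul_cancel₀ _ hD4.ne']
      ring
    rw [hρ, hb, div_lt_div_iff₀ hr0 hD4]
    nlinarith [hl3]
  -- the convergence estimate
  have htge : ∀ k, 1 ≤ k → 1 ≤ t k := by
    intro k hk
    induction k, hk using Nat.le_induction with
    | base => rw [ht1]
    | succ m hm ih => have := htmono m hm; linarith
  have hx' : ∀ k, x (k + 1) = y k - (1 / L) • gradient f (y k) := by
    intro k
    rw [hx k, hs]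
  -- descent corollary
  have hgrad : ∀ w : EuclideanSpace ℝ (Fin n),
      2 * L * f (w - (1 / L) • gradient f w) ≤ 2 * L * f w - ‖gradient f w‖ ^ 2 := by
    intro w
    have h := smooth_upper f L hL hf hlip w (w - (1 / L) • gradient f w)
    have h1 : w - (1 / L) • gradient f w - w = -((1 / L) • gradient f w) := by abel
    rw [h1, inner_neg_right, real_inner_smul_right, real_inner_self_eq_norm_sq,
      norm_neg, norm_smul, Real.norm_eq_abs, abs_of_pos (by positivity : (0:ℝ) < 1 / L)] at h
    have h2 := mul_le_mul_of_nonneg_left h (by positivity : (0:ℝ) ≤ 2 * L)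
    have h3 : 2 * L * (f w + -(1 / L * ‖gradient f w‖ ^ 2)
        + L / 2 * (1 / L * ‖gradient f w‖) ^ 2) = 2 * L * f w - ‖gradient f w‖ ^ 2 := by
      field_simp
      ring
    calc 2 * L * f (w - (1 / L) • gradient f w)
        ≤ 2 * L * (f w + -(1 / L * ‖gradient f w‖ ^ 2)
            + L / 2 * (1 / L * ‖gradient f w‖) ^ 2) := h2
      _ = 2 * L * f w - ‖gradient f w‖ ^ 2 := h3
  -- PL corollary
  have hPLa : ∀ w : EuclideanSpace ℝ (Fin n),
      2 * μ * (f w - f xs) ≤ ‖gradient f w‖ ^ 2 := by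
    intro w
    have h := sc_lower f μ hf hsc w xs
    have hib : -(‖gradient f w‖ * ‖xs - w‖) ≤ ⟪gradient f w, xs - w⟫ := by
      have h2 := real_inner_le_norm (-(gradient f w)) (xs - w)
      rw [inner_neg_left, norm_neg] at h2
      linarith
    have h3 : f w - f xs ≤ ‖gradient f w‖ * ‖xs - w‖ - μ / 2 * ‖xs - w‖ ^ 2 := by
      linarith
    have h4 := mul_le_mul_of_nonneg_left h3 (by positivity : (0:ℝ) ≤ 2 * μ)
    nlinarith [h4, sq_nonneg (‖gradient f w‖ - μ * ‖xs - w‖)]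
  -- base step
  have hx1 : x 1 = x 0 - (1 / L) • gradient f (x 0) := by
    rw [hx' 0, ← hxy0]
  have hbase1 : (lamConst μ L * (2 * L - μ) - 1) * ((f (x 1) - f xs)
      + 1 / (2 * lamConst μ L) * ‖x 1 - x 0‖ ^ 2) ≤ f (x 0) - f xs := by
    apply base_key μ L (lamConst μ L) hμ hμL hlam hQ hCnn hr1 _ _
      (‖gradient f (x 0)‖) _ (sub_nonneg.2 (hmin _))
    · -- Hdesc
      have := hgrad (x 0)
      rw [← hx1] at this
      linarith
    · exact hPLa (x 0)
    · -- HP2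
      have hdiff : x 1 - x 0 = -((1 / L) • gradient f (x 0)) := by
        rw [hx1]; abel
      rw [hdiff, norm_neg, norm_smul, Real.norm_eq_abs,
        abs_of_pos (by positivity : (0:ℝ) < 1 / L)]
      field_simp
  -- main step
  have hstepall : ∀ j : ℕ, (lamConst μ L * (2 * L - μ) - 1) * ((f (x (j + 2)) - f xs)
      + 1 / (2 * lamConst μ L) * ‖x (j + 2) - x (j + 1)‖ ^ 2)
      ≤ (f (x (j + 1)) - f xs) + 1 / (2 * lamConst μ L) * ‖x (j + 1) - x j‖ ^ 2 := by
    intro j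
    have ht1j : 1 ≤ t (j + 1) := htge _ (by omega)
    have ht2m : t (j + 1) < t (j + 2) := htmono _ (by omega)
    have htpos : 0 < t (j + 2) := by linarith
    have hβ0 : 0 ≤ (t (j + 1) - 1) / t (j + 2) := div_nonneg (by linarith) htpos.le
    have hβ1 : (t (j + 1) - 1) / t (j + 2) ≤ 1 := (div_le_one htpos).2 (by linarith)
    have hx2 : x (j + 2) = y (j + 1) - (1 / L) • gradient f (y (j + 1)) := hx' (j + 1)
    have hy1 : y (j + 1) = x (j + 1) + ((t (j + 1) - 1) / t (j + 2)) • (x (j + 1) - x j) :=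
      hy j
    have hdesc2 : 2 * L * f (x (j + 2)) ≤ 2 * L * f (y (j + 1))
        - ‖gradient f (y (j + 1))‖ ^ 2 := by
      have h := hgrad (y (j + 1))
      rw [← hx2] at h
      exact h
    have hxysub : x (j + 1) - y (j + 1)
        = -(((t (j + 1) - 1) / t (j + 2)) • (x (j + 1) - x j)) := by
      rw [hy1]; abel
    have hsc1 : f (y (j + 1)) ≤ f (x (j + 1))
        + ((t (j + 1) - 1) / t (j + 2)) * ⟪gradient f (y (j + 1)), x (j + 1) - x j⟫
        - μ / 2 * (((t (j + 1) - 1) / t (j + 2)) ^ 2 * ‖x (j + 1) - x j‖ ^ 2) := by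
      have h := sc_lower f μ hf hsc (y (j + 1)) (x (j + 1))
      rw [hxysub, inner_neg_right, real_inner_smul_right, norm_neg, norm_smul,
        Real.norm_eq_abs] at h
      have habs : |(t (j + 1) - 1) / t (j + 2)| = (t (j + 1) - 1) / t (j + 2) :=
        abs_of_nonneg hβ0
      rw [habs] at h
      nlinarith [h]
    apply step_key μ L (lamConst μ L) hμ hμL hlam hQ hCnn hr1
      ((t (j + 1) - 1) / t (j + 2)) _ _ (‖gradient f (y (j + 1))‖) (‖x (j + 1) - x j‖)
      (⟪gradient f (y (j + 1)), x (j + 1) - x j⟫) _ hβ0 hβ1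
      (real_inner_le_norm _ _) (sub_nonneg.2 (hmin _))
    · -- H1
      have h2L := mul_le_mul_of_nonneg_left hsc1 (by positivity : (0:ℝ) ≤ 2 * L)
      nlinarith [hdesc2, h2L]
    · -- H2
      have hA := mul_le_mul_of_nonneg_left (hPLa (y (j + 1))) hL.le
      have hB := mul_le_mul_of_nonneg_left hdesc2 hμ.le
      nlinarith [hA, hB]
    · -- HP2
      have hdp : x (j + 2) - x (j + 1)
          = ((t (j + 1) - 1) / t (j + 2)) • (x (j + 1) - x j)
            - (1 / L) • gradient f (y (j + 1)) := by
        rw [hx2, hy1]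
        abel
      rw [hdp, norm_sub_sq_real, real_inner_smul_left, real_inner_smul_right,
        norm_smul, norm_smul, Real.norm_eq_abs, Real.norm_eq_abs,
        abs_of_nonneg hβ0, abs_of_pos (by positivity : (0:ℝ) < 1 / L),
        real_inner_comm]
      field_simp
  -- induction
  have hEk : ∀ k, 1 ≤ k → (f (x k) - f xs)
      + 1 / (2 * lamConst μ L) * ‖x k - x (k - 1)‖ ^ 2
      ≤ (1 / (lamConst μ L * (2 * L - μ) - 1)) ^ k * (f (x 0) - f xs) := by
    intro k hk
    induction k, hk using Nat.le_induction with
    | base =>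
      rw [pow_one]
      simp only [Nat.sub_self]
      have hb2 : f (x 1) - f xs + 1 / (2 * lamConst μ L) * ‖x 1 - x 0‖ ^ 2
          ≤ (f (x 0) - f xs) / (lamConst μ L * (2 * L - μ) - 1) := by
        rw [le_div_iff₀ hr0]
        nlinarith [hbase1]
      have he : (f (x 0) - f xs) / (lamConst μ L * (2 * L - μ) - 1)
          = 1 / (lamConst μ L * (2 * L - μ) - 1) * (f (x 0) - f xs) := by ring
      linarith
    | succ m hm ih =>
      have hstep' := hstepall (m - 1)
      have hm1 : m - 1 + 2 = m + 1 := by omega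
      have hm2 : m - 1 + 1 = m := by omega
      rw [hm1, hm2] at hstep'
      simp only [Nat.add_sub_cancel]
      have hEm1 : (f (x (m + 1)) - f xs) + 1 / (2 * lamConst μ L) * ‖x (m + 1) - x m‖ ^ 2
          ≤ ((f (x m) - f xs) + 1 / (2 * lamConst μ L) * ‖x m - x (m - 1)‖ ^ 2)
            / (lamConst μ L * (2 * L - μ) - 1) := by
        rw [le_div_iff₀ hr0]
        nlinarith [hstep']
      have h2 : ((f (x m) - f xs) + 1 / (2 * lamConst μ L) * ‖x m - x (m - 1)‖ ^ 2)
            / (lamConst μ L * (2 * L - μ) - 1)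
          ≤ ((1 / (lamConst μ L * (2 * L - μ) - 1)) ^ m * (f (x 0) - f xs))
            / (lamConst μ L * (2 * L - μ) - 1) := (div_le_div_iff_of_pos_right hr0).2 ih
      have h3 : ((1 / (lamConst μ L * (2 * L - μ) - 1)) ^ m * (f (x 0) - f xs))
            / (lamConst μ L * (2 * L - μ) - 1)
          = (1 / (lamConst μ L * (2 * L - μ) - 1)) ^ (m + 1) * (f (x 0) - f xs) := by
        rw [pow_succ]
        ring
      linarith
  intro k hk
  have h := hEk k hk
  rw [hρ]
  have hα : 0 ≤ 1 / (2 * lamConst μ L) * ‖x k - x (k - 1)‖ ^ 2 := by positivity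
  linarith
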